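/- arXiv:2404.12265 — 2 statements merged into one kernel-verified Lean document; each statement's English description precedes it below -/
import Mathlib

section
/- Let Γ be a strongly induced subcomplex of Δ and let e be a valid edge of Γ. Then the edge contraction C_e(Γ) is a strongly induced subcomplex of C_e(Δ). -/
open scoped Classical

namespace Fary

variable {V : Type*}

/-- A simplicial complex: a family of finite sets closed under taking subsets. -/
def IsComplex (K : Set (Finset V)) : Prop := ∀ s ∈ K, ∀ t ⊆ s, t ∈ K

/-- The star of a simplex `σ`: all subsets of simplices of `K` containing `σ`. -/
def star (σ : Finset V) (K : Set (Finset V)) : Set (Finset V) :=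
  {t | ∃ ρ ∈ K, σ ⊆ ρ ∧ t ⊆ ρ}

/-- The set of faces of a single simplex `τ`. -/
def facesOf (τ : Finset V) : Set (Finset V) := {ρ | ρ ⊆ τ}

/-- `Γ` is an induced subcomplex of `Δ`. -/
def Induced (Γ Δ : Set (Finset V)) : Prop :=
  Γ ⊆ Δ ∧ ∀ s ∈ Δ, (∀ v ∈ s, {v} ∈ Γ) → s ∈ Γ

/-- `Γ` is a strongly induced subcomplex of `Δ`: for every simplex of `Δ` not in `Γ`,
the intersection of `Γ` with its star is the set of faces of a single simplex of `Γ`. -/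
def StronglyInduced (Γ Δ : Set (Finset V)) : Prop :=
  Γ ⊆ Δ ∧ ∀ σ ∈ Δ, σ ∉ Γ → ∃ τ ∈ Γ, Γ ∩ star σ Δ = facesOf τ

/-- The derived (barycentric) subdivision: its simplices are the chains (under inclusion)
of nonempty simplices of `Δ`. -/
def derived (Δ : Set (Finset V)) : Set (Finset (Finset V)) :=
  {C | (↑C : Set (Finset V)) ⊆ {s | s ∈ Δ ∧ s.Nonempty} ∧
       IsChain (· ⊆ ·) (↑C : Set (Finset V))}

/-- The biased derived subdivision of a pair `Γ ⊆ Δ`: simplices are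
`τ ∪ {v_{σ₁}, …, v_{σ_k}}` with `τ ∈ Γ`, `σ₁ ⊂ … ⊂ σ_k` simplices of `Δ` not in `Γ`
and `τ ⊆ σ₁`. Old vertices are `Sum.inl`, the new vertex `v_σ` is `Sum.inr σ`. -/
def biased [DecidableEq V] (Γ Δ : Set (Finset V)) : Set (Finset (V ⊕ Finset V)) :=
  {t | ∃ τ ∈ Γ, ∃ C : Finset (Finset V),
    (↑C : Set (Finset V)) ⊆ {s | s ∈ Δ ∧ s ∉ Γ} ∧
    IsChain (· ⊆ ·) (↑C : Set (Finset V)) ∧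
    (∀ s ∈ C, τ ⊆ s) ∧
    t = τ.image Sum.inl ∪ C.image Sum.inr}

/-- The copy of a complex `Γ` over `V` inside the vertex type `V ⊕ Finset V`. -/
def inlify [DecidableEq V] (Γ : Set (Finset V)) : Set (Finset (V ⊕ Finset V)) :=
  {t | ∃ s ∈ Γ, t = s.image Sum.inl}

/-- The vertex map of the edge contraction identifying `b` with `a`. -/
def cmap [DecidableEq V] (a b : V) (v : V) : V := if v = b then a else v

/-- The edge contraction `C_e(K)` at `e = {a,b}`: images of simplices under `cmap a b`. -/
def contract [DecidableEq V] (a b : V) (K : Set (Finset V)) : Set (Finset V) :=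
  {t | ∃ s ∈ K, t = s.image (cmap a b)}

/-- A missing simplex of `K`: not a simplex, but all proper subsets are simplices. -/
def Missing (K : Set (Finset V)) (m : Finset V) : Prop := m ∉ K ∧ ∀ t ⊂ m, t ∈ K

/-- The stellar subdivision of `Δ` at `σ`, with new vertex `none`. -/
def stellar [DecidableEq V] (σ : Finset V) (Δ : Set (Finset V)) : Set (Finset (Option V)) :=
  {t | (∃ s ∈ Δ, ¬ σ ⊆ s ∧ t = s.image some) ∨
       (∃ τ ρ : Finset V, τ ⊂ σ ∧ ρ ∩ σ = ∅ ∧ σ ∪ ρ ∈ Δ ∧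
         t = insert none ((τ ∪ ρ).image some))}

/-- The edge subdivision `S_e` at the edge `e = {a,b}` is the stellar subdivision at `e`. -/
def subdivEdge [DecidableEq V] (a b : V) (K : Set (Finset V)) : Set (Finset (Option V)) :=
  stellar {a, b} K

/-- `s` is a facet (maximal simplex) of `K`. -/
def IsFacet (K : Set (Finset V)) (s : Finset V) : Prop :=
  s ∈ K ∧ ∀ t ∈ K, s ⊆ t → t = s

end Fary

/-!
Write `f = cmap a b` and, for `σ ∈ Δ`, let `w = f(σ) \ {a}`: the part of `σ` that the contraction
does not touch. Strongly induced subcomplexes are induced, and `{a}, {b} ∈ Γ`, so a simplex of `Δ`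
lying in `{a, b} ∪ s` with `s ∈ Γ` is in `Γ`. Since `σ ⊆ {a, b} ∪ w`, the assumption
`f(σ) ∉ C_e(Γ)` forces `w ∉ Γ`, and `Γ ∩ st_w(Δ)` is the set of faces of some `τ ∈ Γ`.
Then `C_e(Γ) ∩ st_{f(σ)}(C_e(Δ))` is the set of faces of `f(τ)`: a face `f(s)` of the left side
lifts to a simplex of `Γ` in `st_w(Δ)`, hence to a face of `τ`; conversely the simplex of `Δ`
witnessing `τ ∈ st_w(Δ)` contains `σ ∩ {a, b}` (these vertices lie in `st_w(Δ)` via `σ`),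
hence all of `σ`.
-/

namespace Fary

section

variable {V : Type*}

theorem StronglyInduced.induced {Γ Δ : Set (Finset V)} (hΓ : IsComplex Γ)
    (h : StronglyInduced Γ Δ) : Induced Γ Δ := by
  refine ⟨h.1, fun π hπ hv => ?_⟩
  by_contra hπΓ
  obtain ⟨τ, hτ, heq⟩ := h.2 π hπ hπΓ
  have hπτ : π ⊆ τ := fun v hvπ => by
    have hv' : ({v} : Finset V) ∈ Γ ∩ star π Δ :=
      ⟨hv v hvπ, π, hπ, subset_rfl, Finset.singleton_subset_iff.2 hvπ⟩
    rw [heq] at hv'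
    exact Finset.singleton_subset_iff.1 hv'
  exact hπΓ (hΓ τ hτ π hπτ)

theorem Induced.mem_of_subset_union [DecidableEq V] {Γ Δ : Set (Finset V)} {e s π : Finset V}
    (hind : Induced Γ Δ) (hΓ : IsComplex Γ) (he : e ∈ Γ) (hs : s ∈ Γ) (hπ : π ∈ Δ)
    (hπes : π ⊆ e ∪ s) : π ∈ Γ :=
  hind.2 π hπ fun v hv => by
    rcases Finset.mem_union.1 (hπes hv) with hve | hvs
    · exact hΓ e he _ (Finset.singleton_subset_iff.2 hve)
    · exact hΓ s hs _ (Finset.singleton_subset_iff.2 hvs)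

section Contraction

variable [DecidableEq V] {a b : V}

theorem cmap_of_ne {x : V} (hx : x ≠ b) : cmap a b x = x := if_neg hx

theorem eq_of_cmap_eq_of_ne_left {x y : V} (h : cmap a b x = y) (hy : y ≠ a) : x = y := by
  by_cases hx : x = b
  · exact absurd (by simpa [cmap, hx] using h.symm) hy
  · rwa [cmap_of_ne hx] at h

theorem erase_image_cmap_subset {s ρ : Finset V}
    (h : s.image (cmap a b) ⊆ ρ.image (cmap a b)) : (s.image (cmap a b)).erase a ⊆ ρ := by
  intro v hv
  obtain ⟨x, hx, hxv⟩ := Finset.mem_image.1 (h (Finset.mem_of_mem_erase hv))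
  exact eq_of_cmap_eq_of_ne_left hxv (Finset.ne_of_mem_erase hv) ▸ hx

theorem subset_union_erase_image_cmap (σ : Finset V) :
    σ ⊆ {a, b} ∪ (σ.image (cmap a b)).erase a := by
  intro x hx
  by_cases hxe : x ∈ ({a, b} : Finset V)
  · exact Finset.mem_union_left _ hxe
  · have hxa : x ≠ a := fun h => hxe (by simp [h])
    have hxb : x ≠ b := fun h => hxe (by simp [h])
    refine Finset.mem_union_right _ (Finset.mem_erase.2 ⟨hxa, ?_⟩)
    exact cmap_of_ne hxb ▸ Finset.mem_image_of_mem _ hx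

theorem subset_union_of_image_cmap_subset {s π : Finset V}
    (h : π.image (cmap a b) ⊆ s.image (cmap a b)) : π ⊆ {a, b} ∪ s :=
  (subset_union_erase_image_cmap π).trans
    (Finset.union_subset_union_right (erase_image_cmap_subset h))

theorem contract_subset_contract {Γ Δ : Set (Finset V)} (h : Γ ⊆ Δ) :
    contract a b Γ ⊆ contract a b Δ := by
  rintro _ ⟨s, hs, rfl⟩
  exact ⟨s, h hs, rfl⟩

variable {Γ Δ : Set (Finset V)} {σ τ : Finset V}

theorem contract_inter_star_subset_facesOf (hΓ : IsComplex Γ) (hΔ : IsComplex Δ)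
    (hind : Induced Γ Δ) (he : ({a, b} : Finset V) ∈ Γ)
    (heq : Γ ∩ star ((σ.image (cmap a b)).erase a) Δ = facesOf τ) :
    contract a b Γ ∩ star (σ.image (cmap a b)) (contract a b Δ) ⊆
      facesOf (τ.image (cmap a b)) := by
  rintro _ ⟨⟨s, hs, rfl⟩, _, ⟨ρ, hρ, rfl⟩, hσρ, hsρ⟩
  obtain ⟨π, hπρ, hπs⟩ := Finset.subset_image_iff.1 hsρ
  have hπΓ : π ∈ Γ := hind.mem_of_subset_union hΓ he hs (hΔ ρ hρ π hπρ)
    (subset_union_of_image_cmap_subset hπs.le)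
  have hπτ : π ∈ facesOf τ := heq ▸ ⟨hπΓ, ρ, hρ, erase_image_cmap_subset hσρ, hπρ⟩
  exact hπs ▸ Finset.image_subset_image hπτ

theorem facesOf_subset_contract_inter_star (hΓ : IsComplex Γ)
    (he : ({a, b} : Finset V) ∈ Γ) (hσ : σ ∈ Δ)
    (heq : Γ ∩ star ((σ.image (cmap a b)).erase a) Δ = facesOf τ) :
    facesOf (τ.image (cmap a b)) ⊆
      contract a b Γ ∩ star (σ.image (cmap a b)) (contract a b Δ) := by
  intro t ht
  obtain ⟨hτΓ, ρ, hρ, hwρ, hτρ⟩ : τ ∈ Γ ∩ star ((σ.image (cmap a b)).erase a) Δ :=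
    heq ▸ (subset_rfl : τ ⊆ τ)
  have hσρ : σ ⊆ ρ := by
    intro x hx
    by_cases hxe : x ∈ ({a, b} : Finset V)
    · have hx' : ({x} : Finset V) ∈ Γ ∩ star ((σ.image (cmap a b)).erase a) Δ :=
        ⟨hΓ _ he _ (Finset.singleton_subset_iff.2 hxe), σ, hσ,
          erase_image_cmap_subset subset_rfl, Finset.singleton_subset_iff.2 hx⟩
      rw [heq] at hx'
      exact hτρ (Finset.singleton_subset_iff.1 hx')
    · exact hwρ ((Finset.mem_union.1 (subset_union_erase_image_cmap σ hx)).resolve_left hxe)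
  obtain ⟨s, hsτ, rfl⟩ := Finset.subset_image_iff.1 (show t ⊆ τ.image (cmap a b) from ht)
  exact ⟨⟨s, hΓ τ hτΓ s hsτ, rfl⟩, ρ.image (cmap a b), ⟨ρ, hρ, rfl⟩,
    Finset.image_subset_image hσρ, Finset.image_subset_image (hsτ.trans hτρ)⟩

end Contraction

end

theorem contract_stronglyInduced_general {V : Type*} [DecidableEq V] (Γ Δ : Set (Finset V))
    (hΓ : IsComplex Γ) (hΔ : IsComplex Δ) (hstr : StronglyInduced Γ Δ)
    (a b : V) (he : ({a, b} : Finset V) ∈ Γ) :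
    StronglyInduced (contract a b Γ) (contract a b Δ) := by
  have hind := hstr.induced hΓ
  refine ⟨contract_subset_contract hstr.1, ?_⟩
  rintro _ ⟨σ, hσ, rfl⟩ hσΓ
  set w := (σ.image (cmap a b)).erase a
  have hwΓ : w ∉ Γ := fun hw =>
    hσΓ ⟨σ, hind.mem_of_subset_union hΓ he hw hσ (subset_union_erase_image_cmap σ), rfl⟩
  obtain ⟨τ, hτ, heq⟩ := hstr.2 w (hΔ σ hσ w (erase_image_cmap_subset subset_rfl)) hwΓ
  exact ⟨τ.image (cmap a b), ⟨τ, hτ, rfl⟩,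
    (contract_inter_star_subset_facesOf hΓ hΔ hind he heq).antisymm
      (facesOf_subset_contract_inter_star hΓ he hσ heq)⟩

/-- if `Γ` is strongly induced in `Δ` and `e` is a valid edge of `Γ`,
then `C_e(Γ)` is strongly induced in `C_e(Δ)`. -/
theorem contract_stronglyInduced {V : Type*} [DecidableEq V] (Γ Δ : Set (Finset V))
    (hΓ : IsComplex Γ) (hΔ : IsComplex Δ) (hstr : StronglyInduced Γ Δ)
    (a b : V) (hab : a ≠ b) (he : ({a, b} : Finset V) ∈ Γ)
    (hvalid : ¬ ∃ m : Finset V, Missing Γ m ∧ ({a, b} : Finset V) ⊆ m) :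
    StronglyInduced (contract a b Γ) (contract a b Δ) :=
  contract_stronglyInduced_general Γ Δ hΓ hΔ hstr a b he

end Fary
end

section
/- Let Γ be a strongly induced subcomplex of Δ and e an edge of Γ. Then S_e(Γ) is a strongly induced subcomplex of the biased derived subdivision of the pair (S_e(Γ), S_e(Δ)). -/
open scoped Classical

namespace Fary

/-- Strongly induced implies induced (when the subcomplex is a complex). -/
lemma stronglyInduced_induced {V : Type*} {Γ Δ : Set (Finset V)} (hΓ : IsComplex Γ)
    (h : StronglyInduced Γ Δ) : Induced Γ Δ := by
  refine ⟨h.1, fun s hs hv => ?_⟩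
  by_contra hns
  obtain ⟨τ, hτ, heq⟩ := h.2 s hs hns
  have hsub : s ⊆ τ := by
    intro v hvs
    have hmem : ({v} : Finset V) ∈ Γ ∩ star s Δ :=
      ⟨hv v hvs, ⟨s, hs, subset_rfl, Finset.singleton_subset_iff.2 hvs⟩⟩
    rw [heq] at hmem
    exact Finset.singleton_subset_iff.1 hmem
  exact hns (hΓ τ hτ s hsub)

/-- Stellar subdivision of a complex is a complex. -/
lemma stellar_isComplex {V : Type*} [DecidableEq V] (σ : Finset V) {Δ : Set (Finset V)}
    (hΔ : IsComplex Δ) : IsComplex (stellar σ Δ) := by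
  rintro t ht t' ht'
  rcases ht with ⟨s, hs, hns, rfl⟩ | ⟨τ, ρ, hτ, hρ, hσρ, rfl⟩
  · left
    refine ⟨s.filter (fun v => some v ∈ t'), hΔ s hs _ (Finset.filter_subset _ _), ?_, ?_⟩
    · intro hsub; exact hns (hsub.trans (Finset.filter_subset _ _))
    · ext x
      constructor
      · intro hx
        obtain ⟨v, hvs, rfl⟩ := Finset.mem_image.1 (ht' hx)
        exact Finset.mem_image_of_mem _ (Finset.mem_filter.2 ⟨hvs, hx⟩)
      · intro hx
        obtain ⟨v, hv, rfl⟩ := Finset.mem_image.1 hx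
        exact (Finset.mem_filter.1 hv).2
  · set w := (τ ∪ ρ).filter (fun v => some v ∈ t') with hw
    have hwsub : w ⊆ τ ∪ ρ := Finset.filter_subset _ _
    by_cases hn : none ∈ t'
    · right
      refine ⟨w ∩ σ, w \ σ, ?_, Finset.sdiff_inter_self _ _, ?_, ?_⟩
      · refine ssubset_of_subset_of_ssubset ?_ hτ
        intro v hv
        have hvσ := (Finset.mem_inter.1 hv).2
        rcases Finset.mem_union.1 (hwsub (Finset.mem_inter.1 hv).1) with h | h
        · exact h
        · exact absurd (Finset.mem_inter.2 ⟨h, hvσ⟩) (by rw [hρ]; exact Finset.notMem_empty v)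
      · refine hΔ _ hσρ _ ?_
        refine Finset.union_subset (Finset.subset_union_left) ?_
        intro v hv
        rcases Finset.mem_union.1 (hwsub (Finset.mem_sdiff.1 hv).1) with h | h
        · exact Finset.mem_union_left _ (hτ.1 h)
        · exact Finset.mem_union_right _ h
      · have hwid : w ∩ σ ∪ w \ σ = w := sup_inf_sdiff w σ
        rw [hwid]
        ext x
        constructor
        · intro hx
          rcases Finset.mem_insert.1 (ht' hx) with rfl | hx'
          · exact Finset.mem_insert_self _ _
          · obtain ⟨v, hv, rfl⟩ := Finset.mem_image.1 hx'
            exact Finset.mem_insert_of_mem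
              (Finset.mem_image_of_mem _ (Finset.mem_filter.2 ⟨hv, hx⟩))
        · intro hx
          rcases Finset.mem_insert.1 hx with rfl | hx'
          · exact hn
          · obtain ⟨v, hv, rfl⟩ := Finset.mem_image.1 hx'
            exact (Finset.mem_filter.1 hv).2
    · left
      refine ⟨w, hΔ _ hσρ _ (hwsub.trans (Finset.union_subset_union hτ.1 subset_rfl)), ?_, ?_⟩
      · intro hsubw
        have hστρ : σ ⊆ τ := by
          intro v hvσ
          rcases Finset.mem_union.1 (hwsub (hsubw hvσ)) with h | h
          · exact h
          · exact absurd (Finset.mem_inter.2 ⟨h, hvσ⟩)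
              (by rw [hρ]; exact Finset.notMem_empty v)
        exact hτ.not_subset hστρ
      · ext x
        constructor
        · intro hx
          rcases Finset.mem_insert.1 (ht' hx) with rfl | hx'
          · exact absurd hx hn
          · obtain ⟨v, hv, rfl⟩ := Finset.mem_image.1 hx'
            exact Finset.mem_image_of_mem _ (Finset.mem_filter.2 ⟨hv, hx⟩)
        · intro hx
          obtain ⟨v, hv, rfl⟩ := Finset.mem_image.1 hx
          exact (Finset.mem_filter.1 hv).2

/-- Stellar subdivision preserves inducedness (for `σ` a simplex of the subcomplex). -/
lemma stellar_induced {V : Type*} [DecidableEq V] {Γ Δ : Set (Finset V)}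
    (hΓ : IsComplex Γ) (hind : Induced Γ Δ) (σ : Finset V) (hσ : σ ∈ Γ) :
    Induced (stellar σ Γ) (stellar σ Δ) := by
  have hvert : ∀ v : V, ({some v} : Finset (Option V)) ∈ stellar σ Γ → ({v} : Finset V) ∈ Γ := by
    rintro v (⟨s, hs, hns, heq⟩ | ⟨τ, ρ, hτ, hρ, hσρ, heq⟩)
    · have hv : v ∈ s := by
        have : some v ∈ s.image some := by rw [← heq]; exact Finset.mem_singleton_self _
        obtain ⟨x, hx, hxe⟩ := Finset.mem_image.1 this
        rwa [Option.some_inj.1 hxe] at hx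
      have hse : s = {v} := by
        apply Finset.Subset.antisymm
        · intro x hx
          have : some x ∈ ({some v} : Finset (Option V)) :=
            heq ▸ Finset.mem_image_of_mem _ hx
          rw [Finset.mem_singleton] at this
          rw [Finset.mem_singleton]
          exact Option.some_inj.1 this
        · exact Finset.singleton_subset_iff.2 hv
      rwa [← hse]
    · exfalso
      have : (none : Option V) ∈ ({some v} : Finset (Option V)) :=
        heq ▸ Finset.mem_insert_self _ _
      simp at this
  constructor
  · rintro t (⟨s, hs, hns, rfl⟩ | ⟨τ, ρ, hτ, hρ, hσρ, rfl⟩)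
    · exact Or.inl ⟨s, hind.1 hs, hns, rfl⟩
    · exact Or.inr ⟨τ, ρ, hτ, hρ, hind.1 hσρ, rfl⟩
  · rintro t (⟨s, hs, hns, rfl⟩ | ⟨τ, ρ, hτ, hρ, hσρ, rfl⟩) hv
    · left
      refine ⟨s, hind.2 s hs (fun v hvs => hvert v (hv _ (Finset.mem_image_of_mem _ hvs))),
        hns, rfl⟩
    · right
      refine ⟨τ, ρ, hτ, hρ, ?_, rfl⟩
      refine hind.2 _ hσρ (fun v hvs => ?_)
      rcases Finset.mem_union.1 hvs with h | h
      · exact hΓ σ hσ _ (Finset.singleton_subset_iff.2 h)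
      · exact hvert v (hv _ (Finset.mem_insert_of_mem
          (Finset.mem_image_of_mem _ (Finset.mem_union_right _ h))))

/-- A nonempty finite chain has a minimum. -/
lemma chain_min {V : Type*} {C : Finset (Finset V)}
    (hch : IsChain (· ⊆ ·) (↑C : Set (Finset V))) (hne : C.Nonempty) :
    ∃ m ∈ C, ∀ s ∈ C, m ⊆ s := by
  obtain ⟨m, hm, hmin⟩ := C.exists_minimal hne
  refine ⟨m, hm, fun s hs => ?_⟩
  by_cases hsm : s = m
  · exact hsm ▸ subset_rfl
  · rcases hch (by exact_mod_cast hm) (by exact_mod_cast hs) (Ne.symm hsm) with h | h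
    · exact h
    · exact absurd (Finset.Subset.antisymm h (hmin hs h)) hsm

/-- The main general step: the biased derived subdivision of an induced pair of complexes
yields a strongly induced pair. -/
lemma biased_stronglyInduced {V : Type*} [DecidableEq V] {A B : Set (Finset V)}
    (hA : IsComplex A) (hB : IsComplex B) (hind : Induced A B) :
    StronglyInduced (inlify A) (biased A B) := by
  constructor
  · rintro t ⟨s, hs, rfl⟩
    exact ⟨s, hs, ∅, by simp, by simp [IsChain], by simp, by simp⟩
  · rintro σ ⟨τ, hτ, C, hCB, hCchain, hτC, rfl⟩ hσ
    have hCne : C.Nonempty := by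
      by_contra h
      rw [Finset.not_nonempty_iff_eq_empty] at h
      subst h
      exact hσ ⟨τ, hτ, by simp⟩
    obtain ⟨σ₁, hσ₁C, hσ₁min⟩ := chain_min hCchain hCne
    have hσ₁B : σ₁ ∈ B := (hCB (by exact_mod_cast hσ₁C)).1
    set w := σ₁.filter (fun v => ({v} : Finset V) ∈ A) with hwdef
    have hwσ₁ : w ⊆ σ₁ := Finset.filter_subset _ _
    have hwA : w ∈ A :=
      hind.2 w (hB σ₁ hσ₁B w hwσ₁) (fun v hv => (Finset.mem_filter.1 hv).2)
    have hτw : τ ⊆ w := by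
      intro v hv
      exact Finset.mem_filter.2 ⟨hτC σ₁ hσ₁C hv,
        hA τ hτ _ (Finset.singleton_subset_iff.2 hv)⟩
    refine ⟨w.image Sum.inl, ⟨w, hwA, rfl⟩, ?_⟩
    ext t
    simp only [Set.mem_inter_iff, facesOf, Set.mem_setOf_eq]
    constructor
    · rintro ⟨⟨u, hu, rfl⟩, ρ, hρ, hσρ, htρ⟩
      obtain ⟨τ', hτ', C', hC'B, hC'chain, hτ'C', rfl⟩ := hρ
      have huτ' : u ⊆ τ' := by
        intro v hv
        have hmem := htρ (Finset.mem_image_of_mem Sum.inl hv)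
        rcases Finset.mem_union.1 hmem with h | h
        · obtain ⟨x, hx, hxe⟩ := Finset.mem_image.1 h
          exact Sum.inl_injective hxe ▸ hx
        · obtain ⟨s, _, hs⟩ := Finset.mem_image.1 h
          exact absurd hs (by simp)
      have hσ₁C' : σ₁ ∈ C' := by
        have hmem := hσρ (Finset.mem_union_right _ (Finset.mem_image_of_mem Sum.inr hσ₁C))
        rcases Finset.mem_union.1 hmem with h | h
        · obtain ⟨x, _, hx⟩ := Finset.mem_image.1 h
          exact absurd hx (by simp)
        · obtain ⟨s, hs, hse⟩ := Finset.mem_image.1 h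
          exact Sum.inr_injective hse ▸ hs
      have hτ'σ₁ : τ' ⊆ σ₁ := hτ'C' σ₁ hσ₁C'
      refine Finset.image_subset_image ?_
      intro v hv
      exact Finset.mem_filter.2 ⟨hτ'σ₁ (huτ' hv),
        hA u hu _ (Finset.singleton_subset_iff.2 hv)⟩
    · intro ht
      set u := w.filter (fun v => Sum.inl v ∈ t) with hudef
      have htu : t = u.image Sum.inl := by
        ext x
        constructor
        · intro hx
          obtain ⟨v, hvw, rfl⟩ := Finset.mem_image.1 (ht hx)
          exact Finset.mem_image_of_mem _ (Finset.mem_filter.2 ⟨hvw, hx⟩)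
        · intro hx
          obtain ⟨v, hv, rfl⟩ := Finset.mem_image.1 hx
          exact (Finset.mem_filter.1 hv).2
      refine ⟨⟨u, hA w hwA u (Finset.filter_subset _ _), htu⟩,
        w.image Sum.inl ∪ C.image Sum.inr,
        ⟨w, hwA, C, hCB, hCchain, fun s hs => hwσ₁.trans (hσ₁min s hs), rfl⟩,
        Finset.union_subset_union (Finset.image_subset_image hτw) subset_rfl,
        ht.trans Finset.subset_union_left⟩

/-- if `Γ` is strongly induced in `Δ` and `e` is an edge of `Γ`, then
`S_e(Γ)` is strongly induced in the biased derived subdivision of `(S_e(Γ), S_e(Δ))`. -/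
theorem subdivEdge_stronglyInduced {V : Type*} [DecidableEq V] (Γ Δ : Set (Finset V))
    (hΓ : IsComplex Γ) (hΔ : IsComplex Δ) (hstr : StronglyInduced Γ Δ)
    (a b : V) (hab : a ≠ b) (he : ({a, b} : Finset V) ∈ Γ) :
    StronglyInduced (inlify (subdivEdge a b Γ))
      (biased (subdivEdge a b Γ) (subdivEdge a b Δ)) := by
  exact biased_stronglyInduced (stellar_isComplex _ hΓ) (stellar_isComplex _ hΔ)
    (stellar_induced hΓ (stronglyInduced_induced hΓ hstr) _ he)

end Fary
end
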